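/- arXiv:1811.08195 — 2 statements merged into one kernel-verified Lean document; each statement's English description precedes it below -/
import Mathlib

section
/- Let A be a compact operator on a separable Hilbert space H, g ∈ ran A, (u_n), (v_n) orthonormal bases with projections P_N, Q_N. Suppose f^{(N)} ∈ P_N H satisfy ‖Q_N A P_N f^{(N)} − Q_N g‖ → 0 and sup_N ‖f^{(N)}‖ < ∞. Then the residual satisfies ‖g − A f^{(N)}‖ → 0 as N → ∞. -/
/-! The vectors `A f⁽ᴺ⁾` all lie in the compact set `closure (A '' closedBall 0 C)`. The
projections `Q_N` are uniformly bounded and converge strongly to the identity, hence uniformly on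
compact sets, so `‖A f⁽ᴺ⁾ - Q_N A f⁽ᴺ⁾‖ → 0`; also `‖g - Q_N g‖ → 0`. Since `P_N f⁽ᴺ⁾ = f⁽ᴺ⁾`,
the triangle inequality bounds `‖g - A f⁽ᴺ⁾‖` by these two terms plus the truncated residual. -/

open scoped InnerProductSpace
open Filter

/-- Orthogonal projection onto the span of the first `N` vectors of an orthonormal
basis, written as a sum of rank-one operators `∑_{n<N} |u n⟩⟨u n|`. -/
noncomputable def truncProj {H : Type*} [NormedAddCommGroup H] [InnerProductSpace ℂ H]
    (u : ℕ → H) (N : ℕ) : H →L[ℂ] H :=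
  ∑ n ∈ Finset.range N, (innerSL ℂ (u n)).smulRight (u n)

open Topology

theorem ContinuousLinearMap.tendstoUniformlyOn_of_tendsto_of_norm_le {𝕜 E F ι : Type*}
    [NontriviallyNormedField 𝕜] [SeminormedAddCommGroup E] [NormedSpace 𝕜 E]
    [SeminormedAddCommGroup F] [NormedSpace 𝕜 F] {l : Filter ι} {T : ι → E →L[𝕜] F}
    {f : E → F} (hT : ∃ C, ∀ i, ‖T i‖ ≤ C) (h : Tendsto (fun i => ⇑(T i)) l (𝓝 f))
    {K : Set E} (hK : IsCompact K) : TendstoUniformlyOn (fun i => ⇑(T i)) f l K := by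
  have hequi : Equicontinuous ((↑) ∘ T) := ((NormedSpace.equicontinuous_TFAE T).out 5 1).mp hT
  have hcover : ⋃₀ {K : Set E | IsCompact K} = Set.univ :=
    Set.eq_univ_of_forall fun x => ⟨{x}, isCompact_singleton, rfl⟩
  have := (EquicontinuousOn.tendsto_uniformOnFun_iff_pi (fun _ hK => hK) hcover
    (fun K _ => hequi.equicontinuousOn K) l f).mpr h
  exact UniformOnFun.tendsto_iff_tendstoUniformlyOn.mp this K hK

theorem TendstoUniformlyOn.tendsto_dist_of_forall_mem {α β ι : Type*} [PseudoMetricSpace β]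
    {F : ι → α → β} {f : α → β} {l : Filter ι} {s : Set α} (h : TendstoUniformlyOn F f l s)
    {x : ι → α} (hx : ∀ i, x i ∈ s) : Tendsto (fun i => dist (F i (x i)) (f (x i))) l (𝓝 0) := by
  rw [Metric.tendstoUniformlyOn_iff] at h
  refine Metric.tendsto_nhds.mpr fun ε hε => (h ε hε).mono fun i hi => ?_
  rw [Real.dist_0_eq_abs, abs_of_nonneg dist_nonneg, dist_comm]
  exact hi _ (hx i)

section truncProj

variable {H : Type*} [NormedAddCommGroup H] [InnerProductSpace ℂ H]

instance finiteDimensional_span_image_Iio (u : ℕ → H) (N : ℕ) :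
    FiniteDimensional ℂ (Submodule.span ℂ (u '' Set.Iio N)) :=
  FiniteDimensional.span_of_finite ℂ ((Set.finite_Iio N).image u)

theorem truncProj_apply (u : ℕ → H) (N : ℕ) (x : H) :
    truncProj u N x = ∑ n ∈ Finset.range N, ⟪u n, x⟫_ℂ • u n := by
  simp [truncProj]

theorem Orthonormal.truncProj_eq_starProjection {u : ℕ → H} (hu : Orthonormal ℂ u) (N : ℕ) :
    truncProj u N = (Submodule.span ℂ (u '' Set.Iio N)).starProjection := by
  ext x
  refine (Submodule.eq_starProjection_of_mem_of_inner_eq_zero ?_ fun w hw => ?_).symm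
  · rw [truncProj_apply]
    exact Submodule.sum_mem _ fun n hn => Submodule.smul_mem _ _
      (Submodule.subset_span ⟨n, Finset.mem_range.mp hn, rfl⟩)
  · suffices Submodule.span ℂ (u '' Set.Iio N) ≤ LinearMap.ker (innerₛₗ ℂ (x - truncProj u N x))
      from this hw
    rw [Submodule.span_le]
    rintro _ ⟨m, hm, rfl⟩
    rw [SetLike.mem_coe, LinearMap.mem_ker, innerₛₗ_apply_apply, inner_sub_left, truncProj_apply,
      hu.inner_left_sum _ (Finset.mem_range.mpr hm), inner_conj_symm, sub_self]

theorem Orthonormal.norm_truncProj_le {u : ℕ → H} (hu : Orthonormal ℂ u) (N : ℕ) :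
    ‖truncProj u N‖ ≤ 1 :=
  hu.truncProj_eq_starProjection N ▸ Submodule.starProjection_norm_le _

theorem Orthonormal.truncProj_apply_of_mem_span {u : ℕ → H} (hu : Orthonormal ℂ u) {N : ℕ}
    {x : H} (hx : x ∈ Submodule.span ℂ (u '' Set.Iio N)) : truncProj u N x = x := by
  rw [hu.truncProj_eq_starProjection, Submodule.starProjection_eq_self_iff.mpr hx]

theorem HilbertBasis.tendsto_truncProj (v : HilbertBasis ℕ ℂ H) (x : H) :
    Tendsto (fun N => truncProj v N x) atTop (𝓝 x) := by
  convert (v.hasSum_repr x).tendsto_sum_nat using 2 with N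
  simp [truncProj_apply, v.repr_apply_apply]

theorem HilbertBasis.tendstoUniformlyOn_truncProj (v : HilbertBasis ℕ ℂ H) {K : Set H}
    (hK : IsCompact K) : TendstoUniformlyOn (fun N => ⇑(truncProj v N)) id atTop K :=
  ContinuousLinearMap.tendstoUniformlyOn_of_tendsto_of_norm_le
    ⟨1, v.orthonormal.norm_truncProj_le⟩ (tendsto_pi_nhds.mpr v.tendsto_truncProj) hK

end truncProj

theorem stmt5_general (H : Type*) [NormedAddCommGroup H] [InnerProductSpace ℂ H]
    (A : H →L[ℂ] H) (hA : IsCompactOperator A)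
    (g : H)
    (u v : HilbertBasis ℕ ℂ H)
    (f : ℕ → H)
    (hmem : ∀ N : ℕ, f N ∈ Submodule.span ℂ ((u : ℕ → H) '' Set.Iio N))
    (hbdd : ∃ C : ℝ, ∀ N : ℕ, ‖f N‖ ≤ C)
    (hres : Tendsto (fun N : ℕ =>
        ‖truncProj (v : ℕ → H) N (A (truncProj (u : ℕ → H) N (f N)))
          - truncProj (v : ℕ → H) N g‖) atTop (nhds 0)) :
    Tendsto (fun N : ℕ => ‖g - A (f N)‖) atTop (nhds 0) := by
  obtain ⟨C, hC⟩ := hbdd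
  have hK : IsCompact (closure (A '' Metric.closedBall 0 C)) :=
    hA.isCompact_closure_image_of_bounded (f := (A : H →ₗ[ℂ] H)) Metric.isBounded_closedBall
  have hAf : ∀ N, A (f N) ∈ closure (A '' Metric.closedBall 0 C) := fun N =>
    subset_closure ⟨f N, mem_closedBall_zero_iff.mpr (hC N), rfl⟩
  have hQAf := (v.tendstoUniformlyOn_truncProj hK).tendsto_dist_of_forall_mem hAf
  have hQg := tendsto_iff_dist_tendsto_zero.mp (v.tendsto_truncProj g)
  refine squeeze_zero (fun N => norm_nonneg _) (fun N => ?_)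
    (by simpa using (hQg.add hres).add hQAf)
  rw [u.orthonormal.truncProj_apply_of_mem_span (hmem N), ← dist_eq_norm, ← dist_eq_norm,
    dist_comm (truncProj v N g) g, dist_comm (truncProj v N (A (f N))) (truncProj v N g)]
  exact dist_triangle4 _ _ _ _

/-- Compact case: if the truncated residuals vanish and the approximants are uniformly
bounded, then the infinite-dimensional residual vanishes in norm. -/
theorem stmt5 (H : Type*) [NormedAddCommGroup H] [InnerProductSpace ℂ H]
    [CompleteSpace H] (hinf : ¬ FiniteDimensional ℂ H)
    (A : H →L[ℂ] H) (hA : IsCompactOperator A)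
    (g : H) (hg : g ∈ Set.range A)
    (u v : HilbertBasis ℕ ℂ H)
    (f : ℕ → H)
    (hmem : ∀ N : ℕ, f N ∈ Submodule.span ℂ ((u : ℕ → H) '' Set.Iio N))
    (hbdd : ∃ C : ℝ, ∀ N : ℕ, ‖f N‖ ≤ C)
    (hres : Tendsto (fun N : ℕ =>
        ‖truncProj (v : ℕ → H) N (A (truncProj (u : ℕ → H) N (f N)))
          - truncProj (v : ℕ → H) N g‖) atTop (nhds 0)) :
    Tendsto (fun N : ℕ => ‖g - A (f N)‖) atTop (nhds 0) :=
  stmt5_general H A hA g u v f hmem hbdd hres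
end

section
/- Let R be the right-shift on ℓ²(ℕ) and m ≥ 1. The closure of the Krylov subspace K(R, e_{m+1}) = span{R^k e_{m+1} : k ≥ 0} equals span{e_1, ..., e_m}^⊥; in particular the exact solution f = e_m of R f = e_{m+1} does not belong to the closure of K(R, e_{m+1}). -/
/-!
The Krylov vectors `R^k e_m = e_{m+k}` are exactly the tail `e_m, e_{m+1}, …` of the basis.
For a Hilbert basis, the closed span of a subfamily is the orthogonal complement of the
complementary subfamily: a vector orthogonal to the complementary subfamily is the sum of its
expansion over the subfamily alone. The missing vector `e_{m-1}` lies in the complementary span,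
so it is orthogonal to the closure and, being nonzero, not in it.
-/

open Filter

section Shift

variable {𝕜 M : Type*} [Semiring 𝕜] [AddCommMonoid M] [Module 𝕜 M] [TopologicalSpace M]

lemma ContinuousLinearMap.pow_apply_of_apply_eq_succ {R : M →L[𝕜] M} {e : ℕ → M}
    (hR : ∀ n, R (e n) = e (n + 1)) (k n : ℕ) : (R ^ k) (e n) = e (k + n) := by
  induction k with
  | zero => simp
  | succ k ih => rw [pow_succ', mul_apply_eq_comp, ih, hR, Nat.succ_add]

lemma ContinuousLinearMap.range_pow_apply_eq_image_Ici {R : M →L[𝕜] M} {e : ℕ → M}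
    (hR : ∀ n, R (e n) = e (n + 1)) (m : ℕ) :
    Set.range (fun k : ℕ => (R ^ k) (e m)) = e '' Set.Ici m := by
  simp only [pow_apply_of_apply_eq_succ hR]
  exact Set.range_add_eq_image_Ici

end Shift

namespace HilbertBasis

variable {ι 𝕜 E : Type*} [RCLike 𝕜] [NormedAddCommGroup E] [InnerProductSpace 𝕜 E]

lemma span_image_le_orthogonal_span_image_compl (b : HilbertBasis ι 𝕜 E) (s : Set ι) :
    Submodule.span 𝕜 (b '' s) ≤ (Submodule.span 𝕜 (b '' sᶜ))ᗮ := by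
  refine (Submodule.isOrtho_span.2 ?_).le
  rintro _ ⟨i, hi, rfl⟩ _ ⟨j, hj, rfl⟩
  exact b.orthonormal.2 (ne_of_mem_of_not_mem hi hj)

lemma topologicalClosure_span_image (b : HilbertBasis ι 𝕜 E) (s : Set ι) :
    (Submodule.span 𝕜 (b '' s)).topologicalClosure = (Submodule.span 𝕜 (b '' sᶜ))ᗮ := by
  refine le_antisymm (Submodule.topologicalClosure_minimal _
    (b.span_image_le_orthogonal_span_image_compl s) (Submodule.isClosed_orthogonal _)) ?_
  intro x hx
  have hterm (i : ι) : b.repr x i • b i ∈ Submodule.span 𝕜 (b '' s) := by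
    by_cases hi : i ∈ s
    · exact Submodule.smul_mem _ _ (Submodule.subset_span (Set.mem_image_of_mem b hi))
    · have hzero : b.repr x i = 0 := by
        rw [b.repr_apply_apply]
        exact Submodule.inner_right_of_mem_orthogonal
          (Submodule.subset_span (Set.mem_image_of_mem b hi)) hx
      simp [hzero]
  exact mem_closure_of_tendsto (b.hasSum_repr x)
    (Eventually.of_forall fun _ => Submodule.sum_mem _ fun i _ => hterm i)

lemma apply_notMem_orthogonal_span_image (b : HilbertBasis ι 𝕜 E) {s : Set ι} {i : ι}
    (hi : i ∈ s) : b i ∉ (Submodule.span 𝕜 (b '' s))ᗮ := fun h =>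
  b.orthonormal.ne_zero i <| Submodule.disjoint_def.1 (Submodule.orthogonal_disjoint _) _
    (Submodule.subset_span (Set.mem_image_of_mem b hi)) h

end HilbertBasis

theorem stmt14_general (H : Type*) [NormedAddCommGroup H] [InnerProductSpace ℂ H]
    (e : HilbertBasis ℕ ℂ H)
    (R : H →L[ℂ] H) (hR : ∀ n : ℕ, R (e n) = e (n + 1))
    (m : ℕ) (hm : 1 ≤ m) :
    (Submodule.span ℂ (Set.range fun k : ℕ => (R ^ k) (e m))).topologicalClosure
        = (Submodule.span ℂ ((e : ℕ → H) '' Set.Iio m))ᗮ ∧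
      e (m - 1) ∉
        (Submodule.span ℂ (Set.range fun k : ℕ => (R ^ k) (e m))).topologicalClosure := by
  have hclosure :
      (Submodule.span ℂ (Set.range fun k : ℕ => (R ^ k) (e m))).topologicalClosure
        = (Submodule.span ℂ ((e : ℕ → H) '' Set.Iio m))ᗮ := by
    rw [R.range_pow_apply_eq_image_Ici hR, e.topologicalClosure_span_image, Set.compl_Ici]
  exact ⟨hclosure, hclosure ▸ e.apply_notMem_orthogonal_span_image (Set.mem_Iio.2 (by omega))⟩

/-- For the right shift `R` on `ℓ²(ℕ)` (basis indexed from `0`, so `e (k-1)` is the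
`k`-th basis vector) and `m ≥ 1`, the closure of the Krylov subspace
`K(R, e_{m+1}) = span{R^k e_{m+1}}` equals `span{e_1,…,e_m}ᗮ`; in particular the
exact solution `e_m` of `R f = e_{m+1}` does not belong to this closure. -/
theorem stmt14 (H : Type*) [NormedAddCommGroup H] [InnerProductSpace ℂ H]
    [CompleteSpace H] (e : HilbertBasis ℕ ℂ H)
    (R : H →L[ℂ] H) (hR : ∀ n : ℕ, R (e n) = e (n + 1))
    (m : ℕ) (hm : 1 ≤ m) :
    (Submodule.span ℂ (Set.range fun k : ℕ => (R ^ k) (e m))).topologicalClosure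
        = (Submodule.span ℂ ((e : ℕ → H) '' Set.Iio m))ᗮ ∧
      e (m - 1) ∉
        (Submodule.span ℂ (Set.range fun k : ℕ => (R ^ k) (e m))).topologicalClosure :=
  stmt14_general H e R hR m hm
end
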